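/- arXiv:2001.05914 — 4 statements merged into one kernel-verified Lean document; each statement's English description precedes it below -/
import Mathlib

section
/- For fixed 0 < R' < R and κ > 0, there exists a constant C > 0 such that for all n, |h_n^{(1)}(κR)/h_n^{(1)}(κR')| ≤ C (R'/R)^n, where h_n^{(1)} is the spherical Hankel function of the first kind. -/
open Real MeasureTheory intervalIntegral Filter Topology

/-- The Bessel function of the first kind, defined by its power series
(`t^ν` interpreted via `Real.rpow`, valid for `t > 0`). -/
noncomputable def besselJ (ν : ℝ) (t : ℝ) : ℝ :=
  ∑' k : ℕ, ((-1 : ℝ) ^ k / (k.factorial * Real.Gamma (k + ν + 1))) *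
    (t / 2) ^ (2 * (k : ℝ) + ν)

/-- The spherical Bessel function of the first kind `j_n(t) = √(π/(2t)) J_{n+1/2}(t)`. -/
noncomputable def sphJ (n : ℕ) (t : ℝ) : ℝ :=
  Real.sqrt (Real.pi / (2 * t)) * besselJ ((n : ℝ) + 1 / 2) t

/-- The spherical Bessel function of the second kind
`y_n(t) = √(π/(2t)) Y_{n+1/2}(t) = (-1)^{n+1} √(π/(2t)) J_{-(n+1/2)}(t)`. -/
noncomputable def sphY (n : ℕ) (t : ℝ) : ℝ :=
  (-1 : ℝ) ^ (n + 1) * Real.sqrt (Real.pi / (2 * t)) * besselJ (-((n : ℝ) + 1 / 2)) t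

/-- The spherical Hankel function of the first kind `h_n^{(1)} = j_n + i y_n`. -/
noncomputable def sphH1 (n : ℕ) (t : ℝ) : ℂ := (sphJ n t : ℂ) + Complex.I * (sphY n t : ℂ)

/-- The spherical Hankel function of the second kind `h_n^{(2)} = j_n - i y_n`. -/
noncomputable def sphH2 (n : ℕ) (t : ℝ) : ℂ := (sphJ n t : ℂ) - Complex.I * (sphY n t : ℂ)

/-!
For fixed `t > 0`, `h_n^{(1)}(t)` is dominated by the leading term `(2n-1)!! / t^(n+1)`
(`sphLead n t`) of `y_n(t)`. By the reflection formula the first `n + 1` terms of the series of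
`J_{-(n+1/2)}(t)` all carry the sign `(-1)^n`, so their sum lies between the leading term and
`e^{t²/2}` times it; the remaining terms of that series, and all of `j_n(t)`, are smaller than the
leading term by a factor of order `Cⁿ / n!`. Hence for large `n`,
`sphLead n t / 2 ≤ |h_n(t)| ≤ (e^{t²/2} + 1) * sphLead n t`, and as
`sphLead n (κR) / sphLead n (κR') = (R'/R)^(n+1)`, the quotient is eventually at most
`2 (e^{(κR)²/2} + 1) (R'/R)^n`. The finitely many remaining `n` only enlarge the constant.
-/

open scoped Nat
open Finset

lemma hasSum_pow_div_factorial (x : ℝ) : HasSum (fun k : ℕ => x ^ k / k !) (exp x) := by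
  rw [Real.exp_eq_exp_ℝ]
  exact NormedSpace.expSeries_div_hasSum_exp x

section ExpSeriesBound

variable {f : ℕ → ℝ} {c x : ℝ}

lemma summable_of_abs_le_mul_pow_div_factorial (h : ∀ k, |f k| ≤ c * (x ^ k / k !)) :
    Summable f :=
  ((Real.summable_pow_div_factorial x).mul_left c).of_norm_bounded h

lemma abs_tsum_le_mul_exp_of_abs_le (h : ∀ k, |f k| ≤ c * (x ^ k / k !)) :
    |∑' k, f k| ≤ c * exp x :=
  tsum_of_norm_bounded (f := f) ((hasSum_pow_div_factorial x).mul_left c) h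

end ExpSeriesBound

lemma eventually_mul_pow_le_factorial (K y : ℝ) : ∀ᶠ n : ℕ in atTop, K * y ^ n ≤ n ! := by
  have hlim : Tendsto (fun n : ℕ => K * (y ^ n / n !)) atTop (𝓝 0) := by
    simpa using (FloorSemiring.tendsto_pow_div_factorial_atTop y).const_mul K
  filter_upwards [hlim.eventually (eventually_le_nhds one_pos)] with n hn
  rwa [← mul_div_assoc, div_le_one (by positivity)] at hn

lemma rpow_two_mul_natCast_add {x : ℝ} (hx : 0 < x) (k : ℕ) (y : ℝ) :
    x ^ (2 * (k : ℝ) + y) = (x ^ 2) ^ k * x ^ y := by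
  rw [rpow_add hx, ← pow_mul, ← rpow_natCast]
  push_cast
  ring_nf

lemma rpow_natCast_add_half {x : ℝ} (hx : 0 < x) (n : ℕ) :
    x ^ ((n : ℝ) + 1 / 2) = x ^ n * √x := by
  rw [rpow_add hx, rpow_natCast, sqrt_eq_rpow]

lemma sqrt_pi_div_two_mul (t : ℝ) : √(π / (2 * t)) = √π / (2 * √(t / 2)) := by
  rw [show π / (2 * t) = π / (2 ^ 2 * (t / 2)) by ring, sqrt_div pi_pos.le,
    sqrt_mul (by positivity), sqrt_sq zero_le_two]

lemma pow_mul_factorial_mul_Gamma_le {c s : ℝ} (hc : 0 < c) (hc1 : c ≤ 1) (hcs : c ≤ s)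
    (k : ℕ) : c ^ k * k ! * Gamma s ≤ Gamma (s + k) := by
  induction k with
  | zero => simp
  | succ k ih =>
    have hsk : 0 < s + k := by linarith [hc.trans_le hcs, k.cast_nonneg (α := ℝ)]
    have hstep : c * (k + 1) ≤ s + k := by nlinarith
    have hΓ : 0 ≤ c ^ k * k ! * Gamma s := by
      have := Gamma_pos_of_pos (hc.trans_le hcs)
      positivity
    calc c ^ (k + 1) * (k + 1)! * Gamma s = c * (k + 1) * (c ^ k * k ! * Gamma s) := by
          push_cast [Nat.factorial_succ]; ring
      _ ≤ (s + k) * Gamma (s + k) := mul_le_mul hstep ih hΓ hsk.le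
      _ = Gamma (s + (k + 1 : ℕ)) := by
          rw [Nat.cast_succ, ← add_assoc, Gamma_add_one hsk.ne']

lemma Gamma_three_halves : Gamma (3 / 2) = √π / 2 := by
  rw [show (3 / 2 : ℝ) = 1 / 2 + 1 by norm_num, Gamma_add_one (by norm_num), Gamma_one_half_eq]
  ring

lemma sqrt_pi_mul_factorial_le_Gamma (n : ℕ) : √π * n ! ≤ 2 ^ n * Gamma (n + 1 / 2) := by
  have h := pow_mul_factorial_mul_Gamma_le (c := 1 / 2) (s := 1 / 2) (by norm_num) (by norm_num)
    le_rfl n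
  rw [Gamma_one_half_eq, add_comm] at h
  calc √π * n ! = 2 ^ n * ((1 / 2) ^ n * n ! * √π) := by
        rw [one_div, inv_pow]; field_simp
    _ ≤ 2 ^ n * Gamma (n + 1 / 2) := by gcongr

lemma Gamma_natCast_sub_add_half_le {n k : ℕ} (hk : k ≤ n) :
    Gamma ((n - k : ℕ) + 1 / 2) ≤ 2 ^ k * Gamma (n + 1 / 2) := by
  set s : ℝ := (n - k : ℕ) + 1 / 2
  have h := pow_mul_factorial_mul_Gamma_le (c := 1 / 2) (s := s) (by norm_num) (by norm_num)
    (by simp [s]) k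
  rw [show s + k = n + 1 / 2 by simp only [s, Nat.cast_sub hk]; ring] at h
  have hk1 : (1 : ℝ) ≤ k ! := by exact_mod_cast k.factorial_pos
  have hΓ : 0 < Gamma s := Gamma_pos_of_pos (by positivity)
  calc Gamma s = 2 ^ k * ((1 / 2) ^ k * Gamma s) := by rw [← mul_assoc, ← mul_pow]; norm_num
    _ ≤ 2 ^ k * ((1 / 2) ^ k * k ! * Gamma s) := by
        gcongr
        exact le_mul_of_one_le_right (by positivity) hk1
    _ ≤ 2 ^ k * Gamma (n + 1 / 2) := by gcongr

lemma Gamma_nat_add_half_mul_Gamma_half_sub (m : ℕ) :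
    Gamma (m + 1 / 2) * Gamma (1 / 2 - m) = (-1) ^ m * π := by
  have h := Gamma_mul_Gamma_one_sub (m + 1 / 2)
  rw [show 1 - ((m : ℝ) + 1 / 2) = 1 / 2 - m by ring,
    show π * (m + 1 / 2) = m * π + π / 2 by ring, sin_add_pi_div_two, cos_nat_mul_pi] at h
  rw [h]
  rcases neg_one_pow_eq_or ℝ m with hm | hm <;> simp [hm, div_neg]

lemma Gamma_le_sum_Gamma_mul_pow_div_factorial (n : ℕ) {y : ℝ} (hy : 0 ≤ y) :
    Gamma (n + 1 / 2) ≤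
      ∑ k ∈ range (n + 1), Gamma ((n - k : ℕ) + 1 / 2) * (y ^ k / k !) := by
  have hterm : ∀ k ∈ range (n + 1), 0 ≤ Gamma ((n - k : ℕ) + 1 / 2) * (y ^ k / k !) :=
    fun k _ => mul_nonneg (Gamma_pos_of_pos (by positivity)).le (by positivity)
  simpa using single_le_sum hterm (mem_range.mpr n.succ_pos)

lemma sum_Gamma_mul_pow_div_factorial_le (n : ℕ) {y : ℝ} (hy : 0 ≤ y) :
    ∑ k ∈ range (n + 1), Gamma ((n - k : ℕ) + 1 / 2) * (y ^ k / k !) ≤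
      Gamma (n + 1 / 2) * exp (2 * y) :=
  calc ∑ k ∈ range (n + 1), Gamma ((n - k : ℕ) + 1 / 2) * (y ^ k / k !)
      ≤ ∑ k ∈ range (n + 1), Gamma (n + 1 / 2) * ((2 * y) ^ k / k !) := by
        refine sum_le_sum fun k hk => ?_
        rw [show Gamma (n + 1 / 2) * ((2 * y) ^ k / k !) = 2 ^ k * Gamma (n + 1 / 2) * (y ^ k / k !)
          by ring]
        gcongr
        exact Gamma_natCast_sub_add_half_le (Nat.lt_succ_iff.mp (mem_range.mp hk))
    _ ≤ Gamma (n + 1 / 2) * exp (2 * y) := by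
        rw [← mul_sum]
        exact mul_le_mul_of_nonneg_left (sum_le_exp_of_nonneg (by positivity) _)
          (Gamma_pos_of_pos (by positivity)).le

noncomputable def besselJTerm (ν t : ℝ) (k : ℕ) : ℝ :=
  (-1) ^ k / (k ! * Gamma (k + ν + 1)) * (t / 2) ^ (2 * (k : ℝ) + ν)

lemma besselJ_eq_tsum (ν t : ℝ) : besselJ ν t = ∑' k, besselJTerm ν t k := rfl

section BesselBounds

variable {t : ℝ}

lemma abs_besselJTerm_le {ν : ℝ} (hν : 0 ≤ ν) (ht : 0 < t) (k : ℕ) :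
    |besselJTerm ν t k| ≤ (t / 2) ^ ν / Gamma (ν + 1) * (((t / 2) ^ 2) ^ k / k !) := by
  have hΓ := pow_mul_factorial_mul_Gamma_le one_pos le_rfl (by linarith : (1 : ℝ) ≤ ν + 1) k
  rw [one_pow, one_mul, show ν + 1 + (k : ℝ) = k + ν + 1 by ring] at hΓ
  have hk1 : (1 : ℝ) ≤ k ! := by exact_mod_cast k.factorial_pos
  have hden : (k ! : ℝ) * Gamma (ν + 1) ≤ k ! * Gamma (k + ν + 1) :=
    hΓ.trans (le_mul_of_one_le_left (Gamma_pos_of_pos (by positivity)).le hk1)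
  rw [besselJTerm, abs_mul, abs_div, abs_pow, abs_neg, abs_one, one_pow,
    abs_of_pos (rpow_pos_of_pos (by positivity) _), abs_of_pos (by positivity),
    rpow_two_mul_natCast_add (by positivity)]
  calc 1 / (k ! * Gamma (k + ν + 1)) * (((t / 2) ^ 2) ^ k * (t / 2) ^ ν)
      ≤ 1 / (k ! * Gamma (ν + 1)) * (((t / 2) ^ 2) ^ k * (t / 2) ^ ν) := by
        gcongr
    _ = (t / 2) ^ ν / Gamma (ν + 1) * (((t / 2) ^ 2) ^ k / k !) := by ring

lemma abs_besselJ_le {ν : ℝ} (hν : 0 ≤ ν) (ht : 0 < t) :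
    |besselJ ν t| ≤ (t / 2) ^ ν / Gamma (ν + 1) * exp (t ^ 2 / 4) := by
  have h := abs_tsum_le_mul_exp_of_abs_le (abs_besselJTerm_le hν ht)
  rwa [div_pow, show (2 : ℝ) ^ 2 = 4 by norm_num] at h

variable {n : ℕ}

lemma besselJTerm_neg_half_of_le {k : ℕ} (hk : k ≤ n) (ht : 0 < t) :
    besselJTerm (-(n + 1 / 2)) t k = (-1) ^ n *
      ((t / 2) ^ (-(n + 1 / 2 : ℝ)) / π *
        (Gamma ((n - k : ℕ) + 1 / 2) * (((t / 2) ^ 2) ^ k / k !))) := by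
  obtain ⟨m, rfl⟩ := Nat.exists_eq_add_of_le hk
  have hrefl := Gamma_nat_add_half_mul_Gamma_half_sub m
  have hΓ : 0 < Gamma (m + 1 / 2) := Gamma_pos_of_pos (by positivity)
  have hm2 : ((-1 : ℝ) ^ m) ^ 2 = 1 := by rw [← pow_mul, pow_mul', neg_one_sq, one_pow]
  rw [besselJTerm, rpow_two_mul_natCast_add (by positivity), Nat.add_sub_cancel_left,
    show (k : ℝ) + -((k + m : ℕ) + 1 / 2) + 1 = 1 / 2 - m by push_cast; ring,
    eq_div_of_mul_eq hΓ.ne' (by rw [mul_comm, hrefl] : Gamma (1 / 2 - m) * _ = _), pow_add]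
  field_simp
  exact hm2.symm

lemma abs_besselJTerm_neg_half_add_le (m : ℕ) (ht : 0 < t) :
    |besselJTerm (-(n + 1 / 2)) t (m + (n + 1))| ≤
      2 * (t / 2) ^ ((n : ℝ) + 3 / 2) / (√π * (n + 1)!) * (((t / 2) ^ 2) ^ m / m !) := by
  have hΓ := pow_mul_factorial_mul_Gamma_le one_pos le_rfl (by norm_num : (1 : ℝ) ≤ 3 / 2) m
  rw [one_pow, one_mul, Gamma_three_halves] at hΓ
  have hfac : ((n + 1)! : ℝ) ≤ (m + (n + 1))! := by
    exact_mod_cast Nat.factorial_le (Nat.le_add_left _ _)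
  rw [besselJTerm, abs_mul, abs_div, abs_pow, abs_neg, abs_one, one_pow,
    abs_of_pos (rpow_pos_of_pos (by positivity) _),
    show (((m + (n + 1) : ℕ) : ℝ) + -(n + 1 / 2) + 1) = 3 / 2 + m by push_cast; ring,
    abs_of_pos (mul_pos (by positivity) (Gamma_pos_of_pos (by positivity))),
    show 2 * ((m + (n + 1) : ℕ) : ℝ) + -(n + 1 / 2) = 2 * m + (n + 3 / 2) by push_cast; ring,
    rpow_two_mul_natCast_add (by positivity)]
  calc 1 / ((m + (n + 1))! * Gamma (3 / 2 + m)) *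
        (((t / 2) ^ 2) ^ m * (t / 2) ^ ((n : ℝ) + 3 / 2))
      ≤ 1 / ((n + 1)! * (m ! * (√π / 2))) *
        (((t / 2) ^ 2) ^ m * (t / 2) ^ ((n : ℝ) + 3 / 2)) := by
        gcongr
    _ = 2 * (t / 2) ^ ((n : ℝ) + 3 / 2) / (√π * (n + 1)!) * (((t / 2) ^ 2) ^ m / m !) := by
        field_simp

lemma besselJ_neg_half_decomp (ht : 0 < t) :
    ∃ P T : ℝ, besselJ (-(n + 1 / 2)) t = (-1) ^ n * P + T ∧
      (t / 2) ^ (-(n + 1 / 2 : ℝ)) / π * Gamma (n + 1 / 2) ≤ P ∧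
      P ≤ (t / 2) ^ (-(n + 1 / 2 : ℝ)) / π * Gamma (n + 1 / 2) * exp (t ^ 2 / 2) ∧
      |T| ≤ 2 * (t / 2) ^ ((n : ℝ) + 3 / 2) / (√π * (n + 1)!) * exp (t ^ 2 / 4) := by
  set A := (t / 2) ^ (-(n + 1 / 2 : ℝ)) / π
  have hA : 0 < A := div_pos (rpow_pos_of_pos (by positivity) _) pi_pos
  have htail := fun m => abs_besselJTerm_neg_half_add_le (n := n) m ht
  refine ⟨A * ∑ k ∈ range (n + 1), Gamma ((n - k : ℕ) + 1 / 2) * (((t / 2) ^ 2) ^ k / k !),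
    ∑' m, besselJTerm (-(n + 1 / 2)) t (m + (n + 1)), ?_, ?_, ?_, ?_⟩
  · rw [besselJ_eq_tsum, ← ((summable_nat_add_iff (n + 1)).mp
      (summable_of_abs_le_mul_pow_div_factorial htail)).sum_add_tsum_nat_add (n + 1), mul_sum,
      mul_sum]
    exact congrArg (· + _) (sum_congr rfl fun k hk =>
      besselJTerm_neg_half_of_le (Nat.lt_succ_iff.mp (mem_range.mp hk)) ht)
  · exact mul_le_mul_of_nonneg_left (Gamma_le_sum_Gamma_mul_pow_div_factorial n (by positivity))
      hA.le
  · rw [mul_assoc]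
    refine mul_le_mul_of_nonneg_left ?_ hA.le
    rw [show t ^ 2 / 2 = 2 * (t / 2) ^ 2 by ring]
    exact sum_Gamma_mul_pow_div_factorial_le n (by positivity)
  · rw [show t ^ 2 / 4 = (t / 2) ^ 2 by ring]
    exact abs_tsum_le_mul_exp_of_abs_le htail

end BesselBounds

/-- `sphLead n t = (2n-1)!! / t ^ (n + 1)`, since `2 ^ n * Γ(n + 1/2) = √π * (2n-1)!!`. -/
noncomputable def sphLead (n : ℕ) (t : ℝ) : ℝ :=
  2 ^ n * Gamma (n + 1 / 2) / (√π * t ^ (n + 1))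

section Spherical

variable {n : ℕ} {t : ℝ}

lemma factorial_div_pow_le_sphLead (ht : 0 < t) : n ! / t ^ (n + 1) ≤ sphLead n t := by
  rw [sphLead, div_le_div_iff₀ (by positivity) (by positivity)]
  calc n ! * (√π * t ^ (n + 1)) = √π * n ! * t ^ (n + 1) := by ring
    _ ≤ 2 ^ n * Gamma (n + 1 / 2) * t ^ (n + 1) :=
        mul_le_mul_of_nonneg_right (sqrt_pi_mul_factorial_le_Gamma n) (by positivity)

lemma sphLead_div_sphLead {a b : ℝ} (ha : 0 < a) (hb : 0 < b) :
    sphLead n a / sphLead n b = (b / a) ^ (n + 1) := by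
  rw [sphLead, sphLead, div_pow]
  field_simp

lemma abs_sphJ_le (ht : 0 < t) : |sphJ n t| ≤ t ^ n / n ! * exp (t ^ 2 / 4) := by
  have hJ := abs_besselJ_le (ν := n + 1 / 2) (by positivity) ht
  have hΓ := pow_mul_factorial_mul_Gamma_le (c := 1 / 2) (s := 3 / 2) (by norm_num) (by norm_num)
    (by norm_num) n
  rw [Gamma_three_halves, show (3 / 2 : ℝ) + n = n + 1 / 2 + 1 by ring] at hΓ
  rw [rpow_natCast_add_half (by positivity)] at hJ
  have key : √π * (t / 2) ^ n * n ! ≤ t ^ n * (2 * Gamma (n + 1 / 2 + 1)) :=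
    calc √π * (t / 2) ^ n * n ! = t ^ n * (2 * ((1 / 2) ^ n * n ! * (√π / 2))) := by
          rw [div_pow, one_div, inv_pow]; field_simp
      _ ≤ t ^ n * (2 * Gamma (n + 1 / 2 + 1)) := by gcongr
  rw [sphJ, abs_mul, abs_of_nonneg (sqrt_nonneg _), sqrt_pi_div_two_mul]
  calc √π / (2 * √(t / 2)) * |besselJ (n + 1 / 2) t|
      ≤ √π / (2 * √(t / 2)) *
          ((t / 2) ^ n * √(t / 2) / Gamma (n + 1 / 2 + 1) * exp (t ^ 2 / 4)) := by
        gcongr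
    _ = √π * (t / 2) ^ n / (2 * Gamma (n + 1 / 2 + 1)) * exp (t ^ 2 / 4) := by
        field_simp
    _ ≤ t ^ n / n ! * exp (t ^ 2 / 4) := by
        refine mul_le_mul_of_nonneg_right ?_ (exp_pos _).le
        rw [div_le_div_iff₀ (by positivity) (by positivity)]
        exact key

lemma sqrt_pi_div_two_mul_leading_term (ht : 0 < t) :
    √(π / (2 * t)) * ((t / 2) ^ (-(n + 1 / 2 : ℝ)) / π * Gamma (n + 1 / 2)) =
      sphLead n t := by
  have hr2 : √(t / 2) ^ 2 = t / 2 := sq_sqrt (by positivity)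
  have hπ : √π ^ 2 = π := sq_sqrt pi_pos.le
  rw [rpow_neg (by positivity), rpow_natCast_add_half (by positivity), sqrt_pi_div_two_mul,
    sphLead]
  field_simp
  rw [hπ, hr2, div_pow]
  field_simp
  ring

lemma sqrt_pi_div_two_mul_tail_bound (ht : 0 < t) :
    √(π / (2 * t)) * (2 * (t / 2) ^ ((n : ℝ) + 3 / 2) / (√π * (n + 1)!)) =
      (t / 2) ^ (n + 1) / (n + 1)! := by
  rw [show (n : ℝ) + 3 / 2 = (n + 1 : ℕ) + 1 / 2 by push_cast; ring,
    rpow_natCast_add_half (by positivity), sqrt_pi_div_two_mul]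
  field_simp

lemma abs_sphY_mem_Icc (ht : 0 < t) :
    |sphY n t| ∈ Set.Icc (sphLead n t - (t / 2) ^ (n + 1) / (n + 1)! * exp (t ^ 2 / 4))
      (exp (t ^ 2 / 2) * sphLead n t + (t / 2) ^ (n + 1) / (n + 1)! * exp (t ^ 2 / 4)) := by
  obtain ⟨P, T, hJ, hP₁, hP₂, hT⟩ := besselJ_neg_half_decomp (n := n) ht
  rw [← sqrt_pi_div_two_mul_leading_term ht, ← sqrt_pi_div_two_mul_tail_bound ht]
  set L := (t / 2) ^ (-(n + 1 / 2 : ℝ)) / π * Gamma (n + 1 / 2)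
  set B := 2 * (t / 2) ^ ((n : ℝ) + 3 / 2) / (√π * (n + 1)!)
  set s := √(π / (2 * t))
  have hL : 0 ≤ L := mul_nonneg (div_nonneg (rpow_nonneg (by positivity) _) pi_pos.le)
    (Gamma_pos_of_pos (by positivity)).le
  have hP : |(-1 : ℝ) ^ n * P| = P := by
    rw [abs_mul, abs_pow, abs_neg, abs_one, one_pow, one_mul, abs_of_nonneg (hL.trans hP₁)]
  have hY : |sphY n t| = s * |(-1) ^ n * P + T| := by
    rw [sphY, hJ, abs_mul, abs_mul, abs_pow, abs_neg, abs_one, one_pow, one_mul,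
      abs_of_nonneg (sqrt_nonneg _)]
  have hupper : |(-1) ^ n * P + T| ≤ P + |T| := (abs_add_le _ _).trans_eq (by rw [hP])
  have hlower : P - |T| ≤ |(-1) ^ n * P + T| := by
    simpa [hP] using abs_sub_abs_le_abs_sub ((-1) ^ n * P) (-T)
  rw [hY]
  constructor
  · calc s * L - s * B * exp (t ^ 2 / 4) = s * (L - B * exp (t ^ 2 / 4)) := by ring
      _ ≤ s * |(-1) ^ n * P + T| := by gcongr; linarith
  · calc s * |(-1) ^ n * P + T| ≤ s * (L * exp (t ^ 2 / 2) + B * exp (t ^ 2 / 4)) := by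
          gcongr; linarith
      _ = exp (t ^ 2 / 2) * (s * L) + s * B * exp (t ^ 2 / 4) := by ring

end Spherical

lemma norm_sphH1_le (n : ℕ) (t : ℝ) : ‖sphH1 n t‖ ≤ |sphJ n t| + |sphY n t| := by
  refine (norm_add_le _ _).trans_eq ?_
  rw [norm_mul, Complex.norm_I, one_mul, Complex.norm_real, Complex.norm_real, Real.norm_eq_abs,
    Real.norm_eq_abs]

lemma abs_sphY_le_norm_sphH1 (n : ℕ) (t : ℝ) : |sphY n t| ≤ ‖sphH1 n t‖ := by
  simpa [sphH1] using Complex.abs_im_le_norm (sphH1 n t)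

section Asymptotics

variable {t : ℝ}

lemma sphLead_pos (n : ℕ) (ht : 0 < t) : 0 < sphLead n t :=
  (div_pos (by positivity) (by positivity)).trans_le (factorial_div_pow_le_sphLead ht)

lemma eventually_tail_le_half_sphLead (ht : 0 < t) :
    ∀ᶠ n : ℕ in atTop,
      (t / 2) ^ (n + 1) / (n + 1)! * exp (t ^ 2 / 4) ≤ sphLead n t / 2 := by
  filter_upwards [eventually_mul_pow_le_factorial (2 * exp (t ^ 2 / 4) * (t ^ 2 / 2)) (t ^ 2 / 2)]
    with n hn
  refine le_trans ?_ (div_le_div_of_nonneg_right (factorial_div_pow_le_sphLead ht) two_pos.le)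
  have h1 : (1 : ℝ) ≤ (n + 1)! := by exact_mod_cast (n + 1).factorial_pos
  rw [div_mul_eq_mul_div, div_div, div_le_div_iff₀ (by positivity) (by positivity)]
  calc (t / 2) ^ (n + 1) * exp (t ^ 2 / 4) * (t ^ (n + 1) * 2)
      = 2 * exp (t ^ 2 / 4) * (t ^ 2 / 2) * (t ^ 2 / 2) ^ n := by ring
    _ ≤ n ! := hn
    _ ≤ n ! * (n + 1)! := le_mul_of_one_le_right (by positivity) h1

lemma eventually_abs_sphJ_le_half_sphLead (ht : 0 < t) :
    ∀ᶠ n : ℕ in atTop, |sphJ n t| ≤ sphLead n t / 2 := by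
  filter_upwards [eventually_mul_pow_le_factorial (2 * t * exp (t ^ 2 / 4)) (t ^ 2)] with n hn
  refine (abs_sphJ_le ht).trans (le_trans ?_
    (div_le_div_of_nonneg_right (factorial_div_pow_le_sphLead ht) two_pos.le))
  have h1 : (1 : ℝ) ≤ n ! := by exact_mod_cast n.factorial_pos
  rw [div_mul_eq_mul_div, div_div, div_le_div_iff₀ (by positivity) (by positivity)]
  calc t ^ n * exp (t ^ 2 / 4) * (t ^ (n + 1) * 2) = 2 * t * exp (t ^ 2 / 4) * (t ^ 2) ^ n := by
        ring
    _ ≤ n ! := hn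
    _ ≤ n ! * n ! := le_mul_of_one_le_right (by positivity) h1

lemma eventually_norm_sphH1_mem_Icc (ht : 0 < t) :
    ∀ᶠ n : ℕ in atTop,
      ‖sphH1 n t‖ ∈ Set.Icc (sphLead n t / 2) ((exp (t ^ 2 / 2) + 1) * sphLead n t) := by
  filter_upwards [eventually_tail_le_half_sphLead ht, eventually_abs_sphJ_le_half_sphLead ht]
    with n hτ hJ
  obtain ⟨hY₁, hY₂⟩ := abs_sphY_mem_Icc (n := n) ht
  constructor
  · linarith [abs_sphY_le_norm_sphH1 n t]
  · linarith [norm_sphH1_le n t]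

lemma eventually_norm_sphH1_div_le {a b : ℝ} (hb : 0 < b) (hba : b ≤ a) :
    ∀ᶠ n : ℕ in atTop,
      ‖sphH1 n a / sphH1 n b‖ ≤ 2 * (exp (a ^ 2 / 2) + 1) * (b / a) ^ n := by
  have ha := hb.trans_le hba
  filter_upwards [eventually_norm_sphH1_mem_Icc ha, eventually_norm_sphH1_mem_Icc hb]
    with n hnorm_a hnorm_b
  have hℓ := sphLead_pos n hb
  rw [norm_div, div_le_iff₀ ((half_pos hℓ).trans_le hnorm_b.1)]
  calc ‖sphH1 n a‖ ≤ (exp (a ^ 2 / 2) + 1) * sphLead n a := hnorm_a.2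
    _ = 2 * (exp (a ^ 2 / 2) + 1) * (b / a) ^ (n + 1) * (sphLead n b / 2) := by
        rw [← sphLead_div_sphLead ha hb]
        field_simp
    _ ≤ 2 * (exp (a ^ 2 / 2) + 1) * (b / a) ^ n * ‖sphH1 n b‖ := by
        have hpow : (b / a) ^ (n + 1) ≤ (b / a) ^ n :=
          pow_le_pow_of_le_one (by positivity) (div_le_one_of_le₀ hba ha.le) n.le_succ
        exact mul_le_mul (mul_le_mul_of_nonneg_left hpow (by positivity)) hnorm_b.1
          (by positivity) (by positivity)

end Asymptotics

/-- For fixed `0 < R' < R` and `κ > 0`, the quotient of spherical Hankel functions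
satisfies `|h_n^{(1)}(κR) / h_n^{(1)}(κR')| ≤ C (R'/R)^n` uniformly in `n`. -/
theorem sphH1_quotient_bound (R' R κ : ℝ) (hR' : 0 < R') (hRR : R' < R) (hκ : 0 < κ) :
    ∃ C > 0, ∀ n : ℕ,
      ‖sphH1 n (κ * R) / sphH1 n (κ * R')‖ ≤ C * (R' / R) ^ n := by
  have hpos : ∀ n : ℕ, 0 < (R' / R) ^ n := fun n => pow_pos (div_pos hR' (hR'.trans hRR)) n
  have hev :=
    eventually_norm_sphH1_div_le (mul_pos hκ hR') (mul_le_mul_of_nonneg_left hRR.le hκ.le)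
  rw [mul_div_mul_left R' R hκ.ne'] at hev
  have hO : (fun n => sphH1 n (κ * R) / sphH1 n (κ * R')) =O[atTop] fun n => (R' / R) ^ n :=
    Asymptotics.IsBigO.of_bound _ (hev.mono fun n hn => by rwa [norm_of_nonneg (hpos n).le])
  obtain ⟨C, hC, hbound⟩ := Asymptotics.bound_of_isBigO_nat_atTop hO
  exact ⟨C, hC, fun n => by simpa [norm_of_nonneg (hpos n).le] using hbound (hpos n).ne'⟩
end

section
/- Let ζ ∈ C^1([R', R]) with 0 < R' < R, and let n be a nonnegative integer. Then (1+n²)^{1/2} |ζ(R)|² ≤ C ∫_{R'}^R ((1+n²)|ζ(r)|² + |ζ'(r)|²) dr for a constant C depending only on R and R' (not on n or ζ). -/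
open Real MeasureTheory intervalIntegral

/-!
Multiply `‖ζ‖²` by the affine cutoff `(r - R') / (R - R')`, which vanishes at `R'` and equals `1`
at `R`. The fundamental theorem of calculus bounds `|ζ(R)|²` by the integral of
`(R - R')⁻¹ |ζ|² + 2 |ζ| |ζ'|`. Multiplying by `λ = (1 + n²)^{1/2} ≥ 1` and using
`2 λ |ζ| |ζ'| ≤ λ² |ζ|² + |ζ'|²` and `λ ≤ λ²` gives the bound with `C = 1 + (R - R')⁻¹`.
-/

open Set

theorem weighted_young_le {t c : ℝ} (ht : 1 ≤ t) (hc : 0 ≤ c) (x y : ℝ) :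
    t * (c * x ^ 2 + 2 * (x * y)) ≤ (1 + c) * (t ^ 2 * x ^ 2 + y ^ 2) := by
  nlinarith [sq_nonneg (t * x - y), mul_nonneg hc (sq_nonneg y),
    mul_le_mul_of_nonneg_right (le_self_pow₀ ht two_ne_zero) (mul_nonneg hc (sq_nonneg x))]

section

variable {E : Type*} [NormedAddCommGroup E] [InnerProductSpace ℝ E] {f f' : ℝ → E} {a b : ℝ}

theorem norm_sq_le_integral_of_hasDerivAt (hab : a < b)
    (hf : ∀ r ∈ Icc a b, HasDerivAt f (f' r) r) (hf' : ContinuousOn f' (Icc a b)) :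
    ‖f b‖ ^ 2 ≤ ∫ r in a..b, ((b - a)⁻¹ * ‖f r‖ ^ 2 + 2 * (‖f r‖ * ‖f' r‖)) := by
  have hba : 0 < b - a := sub_pos.2 hab
  have hfc : ContinuousOn f (Icc a b) := HasDerivAt.continuousOn hf
  let φ : ℝ → ℝ := fun r => (r - a) / (b - a)
  have hφ : ∀ r, HasDerivAt φ (b - a)⁻¹ r := fun r => by
    simpa [φ, one_div] using ((hasDerivAt_id r).sub_const a).div_const (b - a)
  have hftc := integral_eq_sub_of_hasDerivAt
    (fun r hr => (hφ r).mul (hf r (uIcc_of_le hab.le ▸ hr)).norm_sq)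
    (ContinuousOn.intervalIntegrable (by rw [uIcc_of_le hab.le]; fun_prop))
  have hφb : φ b = 1 := div_self hba.ne'
  have hφa : φ a = 0 := by simp [φ]
  simp only [Pi.mul_apply, hφb, hφa, one_mul, zero_mul, sub_zero] at hftc
  rw [← hftc]
  refine integral_mono_on hab.le
    (ContinuousOn.intervalIntegrable (by rw [uIcc_of_le hab.le]; fun_prop))
    (ContinuousOn.intervalIntegrable (by rw [uIcc_of_le hab.le]; fun_prop)) fun r hr => ?_
  have hφ0 : 0 ≤ φ r := div_nonneg (sub_nonneg.2 hr.1) hba.le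
  have hφ1 : φ r ≤ 1 := (div_le_one hba).2 (by linarith [hr.2])
  have hinner : inner ℝ (f r) (f' r) ≤ ‖f r‖ * ‖f' r‖ := real_inner_le_norm _ _
  have hnorms : 0 ≤ ‖f r‖ * ‖f' r‖ := by positivity
  nlinarith

theorem sqrt_mul_norm_sq_le_integral {s : ℝ} (hs : 1 ≤ s) (hab : a < b)
    (hf : ∀ r ∈ Icc a b, HasDerivAt f (f' r) r) (hf' : ContinuousOn f' (Icc a b)) :
    √s * ‖f b‖ ^ 2 ≤ (1 + (b - a)⁻¹) * ∫ r in a..b, (s * ‖f r‖ ^ 2 + ‖f' r‖ ^ 2) := by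
  have hc : 0 ≤ (b - a)⁻¹ := inv_nonneg.2 (sub_nonneg.2 hab.le)
  have hfc : ContinuousOn f (Icc a b) := HasDerivAt.continuousOn hf
  have hsq : √s ^ 2 = s := sq_sqrt (by linarith)
  have hone : 1 ≤ √s := one_le_sqrt.2 hs
  calc √s * ‖f b‖ ^ 2
      ≤ √s * ∫ r in a..b, ((b - a)⁻¹ * ‖f r‖ ^ 2 + 2 * (‖f r‖ * ‖f' r‖)) :=
        mul_le_mul_of_nonneg_left (norm_sq_le_integral_of_hasDerivAt hab hf hf') (sqrt_nonneg s)
    _ = ∫ r in a..b, √s * ((b - a)⁻¹ * ‖f r‖ ^ 2 + 2 * (‖f r‖ * ‖f' r‖)) :=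
        (intervalIntegral.integral_const_mul _ _).symm
    _ ≤ ∫ r in a..b, (1 + (b - a)⁻¹) * (s * ‖f r‖ ^ 2 + ‖f' r‖ ^ 2) := by
        refine integral_mono_on hab.le
          (ContinuousOn.intervalIntegrable (by rw [uIcc_of_le hab.le]; fun_prop))
          (ContinuousOn.intervalIntegrable (by rw [uIcc_of_le hab.le]; fun_prop)) fun r _ => ?_
        simpa only [hsq] using weighted_young_le hone hc ‖f r‖ ‖f' r‖
    _ = (1 + (b - a)⁻¹) * ∫ r in a..b, (s * ‖f r‖ ^ 2 + ‖f' r‖ ^ 2) :=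
        intervalIntegral.integral_const_mul _ _

end

theorem trace_coefficient_bound_general (R' R : ℝ) (hRR : R' < R) :
    ∃ C > 0, ∀ (n : ℕ) (ζ ζ' : ℝ → ℂ),
      (∀ r ∈ Set.Icc R' R, HasDerivAt ζ (ζ' r) r) →
      ContinuousOn ζ' (Set.Icc R' R) →
      (1 + (n : ℝ) ^ 2) ^ ((1 : ℝ) / 2) * ‖ζ R‖ ^ 2 ≤
        C * ∫ r in R'..R, ((1 + (n : ℝ) ^ 2) * ‖ζ r‖ ^ 2 + ‖ζ' r‖ ^ 2) := by
  have hRR' : 0 < R - R' := sub_pos.2 hRR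
  refine ⟨1 + (R - R')⁻¹, by positivity, fun n ζ ζ' hζ hζ' => ?_⟩
  rw [← sqrt_eq_rpow]
  exact sqrt_mul_norm_sq_le_integral (le_add_of_nonneg_right (sq_nonneg _)) hRR hζ hζ'

/-- For `ζ ∈ C¹([R',R])` with `0 < R' < R` and any nonnegative integer `n`,
`(1+n²)^{1/2} |ζ(R)|² ≤ C ∫_{R'}^R ((1+n²)|ζ(r)|² + |ζ'(r)|²) dr`
with `C` depending only on `R` and `R'`. -/
theorem trace_coefficient_bound (R' R : ℝ) (hR' : 0 < R') (hRR : R' < R) :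
    ∃ C > 0, ∀ (n : ℕ) (ζ ζ' : ℝ → ℂ),
      (∀ r ∈ Set.Icc R' R, HasDerivAt ζ (ζ' r) r) →
      ContinuousOn ζ' (Set.Icc R' R) →
      (1 + (n : ℝ) ^ 2) ^ ((1 : ℝ) / 2) * ‖ζ R‖ ^ 2 ≤
        C * ∫ r in R'..R, ((1 + (n : ℝ) ^ 2) * ‖ζ r‖ ^ 2 + ‖ζ' r‖ ^ 2) :=
  trace_coefficient_bound_general R' R hRR
end

section
/- For the spherical Hankel functions h_n^{(1)} and h_n^{(2)}, the Wronskian-type determinant W_n(r,t) = h_n^{(1)}(κr) h_n^{(2)}(κt) - h_n^{(2)}(κr) h_n^{(1)}(κt) satisfies, for fixed 0 < R' < t and κ > 0, W_n(R',t) ~ -(2i/((2n+1)κR')) ((t/R')^n - (R'/t)^{n+1}) as n → ∞. -/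
open Real MeasureTheory intervalIntegral Filter Topology

/-- The Wronskian-type determinant
`W_n(r,t) = h_n^{(1)}(κr) h_n^{(2)}(κt) - h_n^{(2)}(κr) h_n^{(1)}(κt)`. -/
noncomputable def Wn (κ : ℝ) (n : ℕ) (r t : ℝ) : ℂ :=
  sphH1 n (κ * r) * sphH2 n (κ * t) - sphH2 n (κ * r) * sphH1 n (κ * t)

/-!
Dividing the power series of `J_ν(x)` by its leading term `(x/2)^ν / Γ(ν+1)` leaves a series
whose `k`-th term is bounded by `(c/m)^k`, with `c = (x/2)^2`, as soon as
`m ≤ (k+1) |k+ν+1|` for all `k`. For `ν = ±(n + 1/2)` one may take `m = n/2`, so the normalized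
functions tend to `1` as `n → ∞`; with the half-integer values of `Γ` this is
`j_n(x) = x^n/(2n+1)‼ · (1 + o(1))` and `y_n(x) = -(2n-1)‼/x^(n+1) · (1 + o(1))`.
Since `W_n = 2i (y_n(κR') j_n(κt) - j_n(κR') y_n(κt))` and `(2n+1)‼ = (2n+1)(2n-1)‼`, the quotient
in the theorem equals `(u_n - ρ^(2n+1) v_n) / (1 - ρ^(2n+1))` with `ρ = R'/t < 1` and
`u_n, v_n → 1`.
-/

open scoped Nat

lemma norm_tsum_sub_zero_le_of_norm_le_geometric {E : Type*} [NormedAddCommGroup E]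
    [CompleteSpace E] {a : ℕ → E} {q : ℝ} (hq0 : 0 ≤ q) (hq1 : q < 1)
    (ha : ∀ k, ‖a k‖ ≤ q ^ k) : ‖∑' k, a k - a 0‖ ≤ q / (1 - q) := by
  have hs : Summable a := .of_norm_bounded (summable_geometric_of_lt_one hq0 hq1) ha
  rw [hs.tsum_eq_zero_add, add_sub_cancel_left, div_eq_mul_inv]
  exact tsum_of_norm_bounded ((hasSum_geometric_of_lt_one hq0 hq1).mul_left q)
    fun k => (ha (k + 1)).trans_eq (pow_succ' q k)

noncomputable def normalizedBesselJ (ν x : ℝ) : ℝ :=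
  besselJ ν x * Real.Gamma (ν + 1) / (x / 2) ^ ν

noncomputable def normalizedBesselTerm (ν c : ℝ) (k : ℕ) : ℝ :=
  (-c) ^ k * Real.Gamma (ν + 1) / (k ! * Real.Gamma (k + ν + 1))

lemma normalizedBesselJ_eq_tsum {x : ℝ} (hx : 0 < x) (ν : ℝ) :
    normalizedBesselJ ν x = ∑' k, normalizedBesselTerm ν ((x / 2) ^ 2) k := by
  have hx2 : 0 < x / 2 := by positivity
  rw [normalizedBesselJ, besselJ, ← tsum_mul_right, ← tsum_div_const]
  refine tsum_congr fun k => ?_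
  have hpow : (x / 2) ^ (2 * (k : ℝ) + ν) = ((x / 2) ^ 2) ^ k * (x / 2) ^ ν := by
    rw [Real.rpow_add hx2, ← pow_mul, ← Real.rpow_natCast]
    push_cast
    ring_nf
  have hν : (x / 2) ^ ν ≠ 0 := (Real.rpow_pos_of_pos hx2 ν).ne'
  rw [normalizedBesselTerm, hpow]
  generalize (x / 2) ^ 2 = c
  field_simp
  rw [neg_pow c]
  ring

lemma normalizedBesselTerm_zero {ν : ℝ} (hν : Real.Gamma (ν + 1) ≠ 0) (c : ℝ) :
    normalizedBesselTerm ν c 0 = 1 := by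
  simp [normalizedBesselTerm, hν]

lemma normalizedBesselTerm_succ {ν : ℝ} (c : ℝ) {k : ℕ} (hk : k + ν + 1 ≠ 0) :
    normalizedBesselTerm ν c (k + 1) =
      normalizedBesselTerm ν c k * (-c / ((k + 1) * (k + ν + 1))) := by
  have hΓ : Real.Gamma (((k + 1 : ℕ) : ℝ) + ν + 1) =
      (k + ν + 1) * Real.Gamma (k + ν + 1) := by
    rw [← Real.Gamma_add_one hk]
    push_cast
    ring_nf
  rw [normalizedBesselTerm, normalizedBesselTerm, hΓ, Nat.factorial_succ, pow_succ]
  push_cast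
  rw [div_mul_div_comm]
  congr 1 <;> ring

lemma natCast_add_add_one_ne_zero_of_le_mul_abs {ν m : ℝ} (hm : 0 < m)
    (hν : ∀ k : ℕ, m ≤ (k + 1) * |k + ν + 1|) (k : ℕ) : (k : ℝ) + ν + 1 ≠ 0 := by
  intro h
  have := hν k
  rw [h, abs_zero, mul_zero] at this
  exact this.not_gt hm

lemma Gamma_add_one_ne_zero_of_le_mul_abs {ν m : ℝ} (hm : 0 < m)
    (hν : ∀ k : ℕ, m ≤ (k + 1) * |k + ν + 1|) : Real.Gamma (ν + 1) ≠ 0 :=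
  Real.Gamma_ne_zero fun k hk =>
    natCast_add_add_one_ne_zero_of_le_mul_abs hm hν k (by linear_combination hk)

lemma abs_normalizedBesselTerm_le {ν m : ℝ} (hm : 0 < m)
    (hν : ∀ k : ℕ, m ≤ (k + 1) * |k + ν + 1|) {c : ℝ} (hc : 0 ≤ c) (k : ℕ) :
    |normalizedBesselTerm ν c k| ≤ (c / m) ^ k := by
  induction k with
  | zero => simp [normalizedBesselTerm_zero (Gamma_add_one_ne_zero_of_le_mul_abs hm hν)]
  | succ k ih =>
    rw [normalizedBesselTerm_succ c (natCast_add_add_one_ne_zero_of_le_mul_abs hm hν k), abs_mul,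
      pow_succ, abs_div, abs_neg, abs_of_nonneg hc, abs_mul,
      abs_of_nonneg (by positivity : (0 : ℝ) ≤ k + 1)]
    gcongr
    exact hν k

lemma abs_normalizedBesselJ_sub_one_le {ν m : ℝ} (hm : 0 < m)
    (hν : ∀ k : ℕ, m ≤ (k + 1) * |k + ν + 1|) {x : ℝ} (hx : 0 < x)
    (hq : (x / 2) ^ 2 / m < 1) :
    |normalizedBesselJ ν x - 1| ≤ (x / 2) ^ 2 / m / (1 - (x / 2) ^ 2 / m) := by
  have h := norm_tsum_sub_zero_le_of_norm_le_geometric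
    (a := normalizedBesselTerm ν ((x / 2) ^ 2)) (by positivity) hq
    (by simpa only [Real.norm_eq_abs] using abs_normalizedBesselTerm_le hm hν (sq_nonneg (x / 2)))
  rwa [Real.norm_eq_abs, normalizedBesselTerm_zero (Gamma_add_one_ne_zero_of_le_mul_abs hm hν),
    ← normalizedBesselJ_eq_tsum hx] at h

lemma tendsto_normalizedBesselJ {ν m : ℕ → ℝ} (hm : Tendsto m atTop atTop)
    (hν : ∀ n k : ℕ, m n ≤ (k + 1) * |k + ν n + 1|) {x : ℝ} (hx : 0 < x) :
    Tendsto (fun n => normalizedBesselJ (ν n) x) atTop (𝓝 1) := by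
  set c := (x / 2) ^ 2
  have hq : Tendsto (fun n => c / m n) atTop (𝓝 0) := tendsto_const_nhds.div_atTop hm
  have hbound : Tendsto (fun n => c / m n / (1 - c / m n)) atTop (𝓝 0) := by
    have h := hq.div (tendsto_const_nhds.sub hq) (by norm_num : (1 : ℝ) - 0 ≠ 0)
    rw [sub_zero, zero_div] at h
    exact h
  refine tendsto_sub_nhds_zero_iff.1 (squeeze_zero_norm' ?_ hbound)
  filter_upwards [hm.eventually_gt_atTop 0, hq.eventually (gt_mem_nhds one_pos)] with n hmn hqn
  exact abs_normalizedBesselJ_sub_one_le hmn (hν n) hx hqn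

lemma tendsto_normalizedBesselJ_nat_add_half {x : ℝ} (hx : 0 < x) :
    Tendsto (fun n : ℕ => normalizedBesselJ (n + 1 / 2) x) atTop (𝓝 1) := by
  refine tendsto_normalizedBesselJ (tendsto_natCast_atTop_atTop.atTop_div_const two_pos)
    (fun n k => ?_) hx
  rw [abs_of_pos (by positivity)]
  nlinarith [(k.cast_nonneg : (0 : ℝ) ≤ k), (n.cast_nonneg : (0 : ℝ) ≤ n)]

lemma tendsto_normalizedBesselJ_neg_nat_add_half {x : ℝ} (hx : 0 < x) :
    Tendsto (fun n : ℕ => normalizedBesselJ (-(n + 1 / 2)) x) atTop (𝓝 1) := by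
  refine tendsto_normalizedBesselJ (tendsto_natCast_atTop_atTop.atTop_div_const two_pos)
    (fun n k => ?_) hx
  rcases lt_or_ge k n with hkn | hkn
  · have hkn : (k : ℝ) + 1 ≤ n := by exact_mod_cast hkn
    rw [abs_of_neg (by linarith)]
    nlinarith [(k.cast_nonneg : (0 : ℝ) ≤ k)]
  · have hkn : (n : ℝ) ≤ k := by exact_mod_cast hkn
    rw [abs_of_pos (by linarith)]
    nlinarith [(k.cast_nonneg : (0 : ℝ) ≤ k)]

/-- For `n = 0` the truncated subtraction gives `0‼ = 1`, the usual convention `(-1)‼ = 1`. -/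
lemma Gamma_one_half_sub_nat (n : ℕ) :
    Real.Gamma (1 / 2 - n) = (-2) ^ n * √π / (2 * n - 1 : ℕ)‼ := by
  induction n with
  | zero => simp [-one_div, Real.Gamma_one_half_eq]
  | succ n ih =>
    have hn : (0 : ℝ) ≤ n := n.cast_nonneg
    rw [show (1 / 2 - n : ℝ) = 1 / 2 - (n + 1 : ℕ) + 1 by push_cast; ring,
      Real.Gamma_add_one (by push_cast; linarith)] at ih
    rw [show 2 * (n + 1) - 1 = 2 * n + 1 by omega, Nat.doubleFactorial_add_one]
    have hD : ((2 * n - 1 : ℕ)‼ : ℝ) ≠ 0 := by positivity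
    push_cast at ih ⊢
    generalize Real.Gamma (1 / 2 - (n + 1)) = G at ih ⊢
    generalize ((2 * n - 1 : ℕ)‼ : ℝ) = D at ih hD ⊢
    field_simp at ih ⊢
    linear_combination -ih

lemma besselJ_eq_mul_normalizedBesselJ {ν x : ℝ} (hx : 0 < x) (hΓ : Real.Gamma (ν + 1) ≠ 0) :
    besselJ ν x = (x / 2) ^ ν / Real.Gamma (ν + 1) * normalizedBesselJ ν x := by
  have hν : (x / 2) ^ ν ≠ 0 := (Real.rpow_pos_of_pos (by positivity) ν).ne'
  rw [normalizedBesselJ]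
  field_simp

lemma sqrt_pi_div_mul_rpow {x : ℝ} (hx : 0 < x) (ν : ℝ) :
    √(π / (2 * x)) * (x / 2) ^ ν = √π / 2 * (x / 2) ^ (ν - 1 / 2) := by
  have hx2 : 0 < x / 2 := by positivity
  have hsqrt : √(π / (2 * x)) * √(x / 2) = √π / 2 := by
    rw [← Real.sqrt_mul (by positivity), show π / (2 * x) * (x / 2) = π / 2 ^ 2 by field_simp,
      Real.sqrt_div' _ (by positivity), Real.sqrt_sq zero_le_two]
  rw [Real.rpow_sub hx2, ← Real.sqrt_eq_rpow, ← hsqrt]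
  field_simp

lemma sphJ_eq {x : ℝ} (hx : 0 < x) (n : ℕ) :
    sphJ n x = x ^ n / (2 * n + 1 : ℕ)‼ * normalizedBesselJ (n + 1 / 2) x := by
  have hΓ : Real.Gamma ((n : ℝ) + 1 / 2 + 1) = (2 * n + 1 : ℕ)‼ * √π / 2 ^ (n + 1) := by
    rw [← Real.Gamma_nat_add_one_add_half]
    ring_nf
  rw [sphJ, besselJ_eq_mul_normalizedBesselJ hx (by rw [hΓ]; positivity), ← mul_assoc,
    ← mul_div_assoc, sqrt_pi_div_mul_rpow hx, add_sub_cancel_right, Real.rpow_natCast, div_pow,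
    hΓ]
  field_simp
  ring

lemma sphY_eq {x : ℝ} (hx : 0 < x) (n : ℕ) :
    sphY n x = -((2 * n - 1 : ℕ)‼ / x ^ (n + 1)) * normalizedBesselJ (-(n + 1 / 2)) x := by
  have hΓ : Real.Gamma (-((n : ℝ) + 1 / 2) + 1) = (-2) ^ n * √π / (2 * n - 1 : ℕ)‼ := by
    rw [← Gamma_one_half_sub_nat]
    ring_nf
  have hexp : -((n : ℝ) + 1 / 2) - 1 / 2 = -((n + 1 : ℕ) : ℝ) := by push_cast; ring
  rw [sphY, besselJ_eq_mul_normalizedBesselJ hx (by rw [hΓ]; positivity), mul_assoc,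
    ← mul_assoc √_, ← mul_div_assoc, sqrt_pi_div_mul_rpow hx, hexp, Real.rpow_neg (by positivity),
    Real.rpow_natCast, div_pow, hΓ, neg_pow 2, pow_succ (-1 : ℝ)]
  field_simp
  ring

lemma Wn_eq_two_I_mul (κ : ℝ) (n : ℕ) (r t : ℝ) :
    Wn κ n r t = 2 * Complex.I *
      ((sphY n (κ * r) * sphJ n (κ * t) - sphJ n (κ * r) * sphY n (κ * t) : ℝ) : ℂ) := by
  simp only [Wn, sphH1, sphH2]
  push_cast
  ring

lemma sphY_mul_sphJ_sub_sphJ_mul_sphY {a b : ℝ} (ha : 0 < a) (hb : 0 < b) (n : ℕ) :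
    sphY n a * sphJ n b - sphJ n a * sphY n b =
      -(1 / ((2 * n + 1) * a)) *
        ((b / a) ^ n * (normalizedBesselJ (-(n + 1 / 2)) a * normalizedBesselJ (n + 1 / 2) b) -
          (a / b) ^ (n + 1) *
            (normalizedBesselJ (n + 1 / 2) a * normalizedBesselJ (-(n + 1 / 2)) b)) := by
  rw [sphJ_eq ha, sphJ_eq hb, sphY_eq ha, sphY_eq hb, Nat.doubleFactorial_add_one, div_pow, div_pow]
  push_cast
  field_simp
  ring

lemma tendsto_pow_mul_sub_pow_mul_div_pow_sub_pow {σ ρ : ℝ} (hσρ : σ * ρ = 1) (hρ0 : 0 ≤ ρ)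
    (hρ1 : ρ < 1) {u v : ℕ → ℝ} (hu : Tendsto u atTop (𝓝 1)) (hv : Tendsto v atTop (𝓝 1)) :
    Tendsto (fun n => (σ ^ n * u n - ρ ^ (n + 1) * v n) / (σ ^ n - ρ ^ (n + 1))) atTop (𝓝 1) := by
  have hρ : ρ ≠ 0 := right_ne_zero_of_mul_eq_one hσρ
  have hrescale : ∀ n, (σ ^ n * u n - ρ ^ (n + 1) * v n) / (σ ^ n - ρ ^ (n + 1)) =
      (u n - ρ ^ (2 * n + 1) * v n) / (1 - ρ ^ (2 * n + 1)) := fun n => by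
    have hpow : σ ^ n * ρ ^ n = 1 := by rw [← mul_pow, hσρ, one_pow]
    rw [← mul_div_mul_left _ _ (pow_ne_zero n hρ)]
    congr 1
    · linear_combination u n * hpow
    · linear_combination hpow
  have hp : Tendsto (fun n => ρ ^ (2 * n + 1)) atTop (𝓝 0) :=
    (tendsto_pow_atTop_nhds_zero_of_lt_one hρ0 hρ1).comp
      (tendsto_atTop_mono (fun n => show n ≤ 2 * n + 1 by omega) tendsto_id)
  have h := (hu.sub (hp.mul hv)).div (tendsto_const_nhds.sub hp) (by norm_num : (1 : ℝ) - 0 ≠ 0)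
  rw [zero_mul, sub_zero, div_one] at h
  exact h.congr fun n => (hrescale n).symm

lemma Wn_div_eq_ofReal {κ r t : ℝ} (hκ : 0 < κ) (hr : 0 < r) (ht : 0 < t) (n : ℕ) :
    Wn κ n r t /
        (-(2 * Complex.I / (((2 * n + 1 : ℕ) : ℂ) * (κ : ℂ) * (r : ℂ))) *
          (((t / r : ℝ) : ℂ) ^ n - ((r / t : ℝ) : ℂ) ^ (n + 1))) =
      (((t / r) ^ n *
            (normalizedBesselJ (-(n + 1 / 2)) (κ * r) * normalizedBesselJ (n + 1 / 2) (κ * t)) -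
          (r / t) ^ (n + 1) *
            (normalizedBesselJ (n + 1 / 2) (κ * r) * normalizedBesselJ (-(n + 1 / 2)) (κ * t))) /
        ((t / r) ^ n - (r / t) ^ (n + 1)) : ℝ) := by
  have h2n : (2 * (n : ℂ) + 1) ≠ 0 := by exact_mod_cast (2 * n).succ_ne_zero
  have hK : -(2 * Complex.I / (((2 * n + 1 : ℕ) : ℂ) * (κ : ℂ) * (r : ℂ))) ≠ 0 := by
    simp [h2n, hκ.ne', hr.ne']
  have hW : Wn κ n r t = -(2 * Complex.I / (((2 * n + 1 : ℕ) : ℂ) * (κ : ℂ) * (r : ℂ))) *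
      ((t / r) ^ n *
            (normalizedBesselJ (-(n + 1 / 2)) (κ * r) * normalizedBesselJ (n + 1 / 2) (κ * t)) -
          (r / t) ^ (n + 1) *
            (normalizedBesselJ (n + 1 / 2) (κ * r) * normalizedBesselJ (-(n + 1 / 2)) (κ * t)) :
        ℝ) := by
    rw [Wn_eq_two_I_mul, sphY_mul_sphJ_sub_sphJ_mul_sphY (mul_pos hκ hr) (mul_pos hκ ht),
      mul_div_mul_left t r hκ.ne', mul_div_mul_left r t hκ.ne']
    push_cast
    ring
  rw [hW, mul_div_mul_left _ _ hK]
  push_cast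
  rfl

/-- For fixed `0 < R' < t` and `κ > 0`,
`W_n(R',t) ~ -(2i/((2n+1)κR')) ((t/R')^n - (R'/t)^(n+1))` as `n → ∞`. -/
theorem Wn_asymptotic (κ R' t : ℝ) (hκ : 0 < κ) (hR' : 0 < R') (ht : R' < t) :
    Tendsto (fun n : ℕ =>
        Wn κ n R' t /
          (-(2 * Complex.I / (((2 * n + 1 : ℕ) : ℂ) * (κ : ℂ) * (R' : ℂ))) *
            (((t / R' : ℝ) : ℂ) ^ n - ((R' / t : ℝ) : ℂ) ^ (n + 1))))
      atTop (𝓝 1) := by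
  have ht0 : 0 < t := hR'.trans ht
  have ha : 0 < κ * R' := mul_pos hκ hR'
  have hb : 0 < κ * t := mul_pos hκ ht0
  have hu := (tendsto_normalizedBesselJ_neg_nat_add_half ha).mul
    (tendsto_normalizedBesselJ_nat_add_half hb)
  have hv := (tendsto_normalizedBesselJ_nat_add_half ha).mul
    (tendsto_normalizedBesselJ_neg_nat_add_half hb)
  rw [mul_one] at hu hv
  have hlim := tendsto_pow_mul_sub_pow_mul_div_pow_sub_pow (σ := t / R') (ρ := R' / t)
    (by field_simp) (by positivity) ((div_lt_one ht0).2 ht) hu hv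
  simpa only [Wn_div_eq_ofReal hκ hR' ht0, Complex.ofReal_one] using hlim.ofReal
end

section
/- Let T and T_N be the full and truncated DtN operators on ∂B_R, where T_N retains only frequencies n ≤ N. If u satisfies |û_n^m(R)| ≤ C(R'/R)^n |û_n^m(R')| and |Θ_n(κR)| ≤ C(1+n(n+1))^{1/2}, then |⟨(T-T_N)u, ψ⟩_{∂B_R}| ≤ C (R'/R)^N ‖u‖_{H^{1/2}(∂B_{R'})} ‖ψ‖_{H^{1/2}(∂B_R)} for all ψ ∈ H^{1/2}(∂B_R). -/
/-! For `n > N` the decay factor `(R'/R)^n` is at most `(R'/R)^N`, and the growth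
`(1 + n(n+1))^{1/2}` of `Θ_n` is split as the product of the square roots of the `H^{1/2}` weights
of `u` and `ψ`. Cauchy–Schwarz, first over `|m| ≤ n` and then over `n`, gives the bound with
`C = R C₁ C₂`. -/

theorem summable_and_tsum_sqrt_mul_sqrt_le {ι : Type*} {f g : ι → ℝ} (hf : ∀ i, 0 ≤ f i)
    (hg : ∀ i, 0 ≤ g i) (hf_sum : Summable f) (hg_sum : Summable g) :
    (Summable fun i => √(f i) * √(g i)) ∧
      ∑' i, √(f i) * √(g i) ≤ √(∑' i, f i) * √(∑' i, g i) := by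
  have hsq : ∀ {x : ℝ}, 0 ≤ x → √x ^ (2 : ℝ) = x := fun hx => by
    rw [Real.rpow_two, Real.sq_sqrt hx]
  have := Real.summable_and_inner_le_Lp_mul_Lq_tsum_of_nonneg Real.HolderConjugate.two_two
    (fun i => Real.sqrt_nonneg (f i)) (fun i => Real.sqrt_nonneg (g i))
    (by simpa only [hsq (hf _)] using hf_sum) (by simpa only [hsq (hg _)] using hg_sum)
  simpa only [hsq (hf _), hsq (hg _), ← Real.sqrt_eq_rpow] using this

theorem norm_tsum_subtype_le_tsum_of_norm_le {ι E : Type*} [SeminormedAddCommGroup E]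
    {p : ι → Prop} {F : ι → E} {g : ι → ℝ} (hg : Summable g) (hg_nonneg : ∀ i, 0 ≤ g i)
    (hF : ∀ i, p i → ‖F i‖ ≤ g i) :
    ‖∑' i : {i // p i}, F i‖ ≤ ∑' i, g i := by
  have hF' : ∀ i : {i // p i}, ‖F i‖ ≤ g i := fun i => hF i i.2
  have hg' : Summable fun i : {i // p i} => g i := hg.subtype {i | p i}
  have hF_sum : Summable fun i : {i // p i} => ‖F i‖ :=
    hg'.of_nonneg_of_le (fun _ => norm_nonneg _) hF'
  calc ‖∑' i : {i // p i}, F i‖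
      ≤ ∑' i : {i // p i}, ‖F i‖ := norm_tsum_le_tsum_norm hF_sum
    _ ≤ ∑' i : {i // p i}, g i := hF_sum.tsum_le_tsum hF' hg'
    _ ≤ ∑' i, g i := hg.tsum_subtype_le g {i | p i} hg_nonneg

theorem norm_sum_mul_mul_conj_le {ι : Type*} (s : Finset ι) (θ : ℂ) {u u' v : ι → ℂ} {c : ℝ}
    (hc : 0 ≤ c) (hu : ∀ m, ‖u m‖ ≤ c * ‖u' m‖) :
    ‖∑ m ∈ s, θ * u m * (starRingEnd ℂ) (v m)‖ ≤
      ‖θ‖ * c * (√(∑ m ∈ s, ‖u' m‖ ^ 2) * √(∑ m ∈ s, ‖v m‖ ^ 2)) := by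
  have hθc : 0 ≤ ‖θ‖ * c := mul_nonneg (norm_nonneg θ) hc
  calc ‖∑ m ∈ s, θ * u m * (starRingEnd ℂ) (v m)‖
      ≤ ∑ m ∈ s, ‖θ * u m * (starRingEnd ℂ) (v m)‖ := norm_sum_le _ _
    _ ≤ ∑ m ∈ s, ‖θ‖ * c * (‖u' m‖ * ‖v m‖) := by
        refine Finset.sum_le_sum fun m _ => ?_
        rw [norm_mul, norm_mul, Complex.norm_conj]
        calc ‖θ‖ * ‖u m‖ * ‖v m‖ ≤ ‖θ‖ * (c * ‖u' m‖) * ‖v m‖ := by gcongr; exact hu m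
          _ = ‖θ‖ * c * (‖u' m‖ * ‖v m‖) := by ring
    _ = ‖θ‖ * c * ∑ m ∈ s, ‖u' m‖ * ‖v m‖ := by rw [Finset.mul_sum]
    _ ≤ ‖θ‖ * c * (√(∑ m ∈ s, ‖u' m‖ ^ 2) * √(∑ m ∈ s, ‖v m‖ ^ 2)) :=
        mul_le_mul_of_nonneg_left (Real.sum_mul_le_sqrt_mul_sqrt s _ _) hθc

theorem sqrt_mul_mul_sqrt_mul {w a b : ℝ} (hw : 0 ≤ w) :
    √(w * a) * √(w * b) = w * (√a * √b) := by
  rw [Real.sqrt_mul hw, Real.sqrt_mul hw,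
    show √w * √a * (√w * √b) = √w * √w * (√a * √b) by ring, Real.mul_self_sqrt hw]

theorem dtn_truncation_bound_general (R' R : ℝ) (hR' : 0 < R') (hRR : R' < R)
    (C₁ C₂ : ℝ) (hC₁ : 0 < C₁) (hC₂ : 0 < C₂) :
    ∃ C > 0, ∀ (N : ℕ) (Θ : ℕ → ℂ) (uR uR' ψ : ℕ → ℤ → ℂ),
      (∀ (n : ℕ) (m : ℤ),
        ‖uR n m‖ ≤ C₁ * (R' / R) ^ n * ‖uR' n m‖) →
      (∀ n : ℕ, ‖Θ n‖ ≤ C₂ * (1 + (n : ℝ) * (n + 1)) ^ ((1 : ℝ) / 2)) →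
      Summable (fun n : ℕ => (1 + (n : ℝ) * (n + 1)) ^ ((1 : ℝ) / 2) *
        ∑ m ∈ Finset.Icc (-(n : ℤ)) (n : ℤ), ‖uR' n m‖ ^ 2) →
      Summable (fun n : ℕ => (1 + (n : ℝ) * (n + 1)) ^ ((1 : ℝ) / 2) *
        ∑ m ∈ Finset.Icc (-(n : ℤ)) (n : ℤ), ‖ψ n m‖ ^ 2) →
      Summable (fun n : {n : ℕ // N < n} =>
        ∑ m ∈ Finset.Icc (-(n.1 : ℤ)) (n.1 : ℤ),
          Θ n.1 * uR n.1 m * (starRingEnd ℂ) (ψ n.1 m)) →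
      ‖(R : ℂ) * ∑' n : {n : ℕ // N < n},
          ∑ m ∈ Finset.Icc (-(n.1 : ℤ)) (n.1 : ℤ),
            Θ n.1 * uR n.1 m * (starRingEnd ℂ) (ψ n.1 m)‖ ≤
        C * (R' / R) ^ N *
          (∑' n : ℕ, (1 + (n : ℝ) * (n + 1)) ^ ((1 : ℝ) / 2) *
            ∑ m ∈ Finset.Icc (-(n : ℤ)) (n : ℤ), ‖uR' n m‖ ^ 2) ^
            ((1 : ℝ) / 2) *
          (∑' n : ℕ, (1 + (n : ℝ) * (n + 1)) ^ ((1 : ℝ) / 2) *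
            ∑ m ∈ Finset.Icc (-(n : ℤ)) (n : ℤ), ‖ψ n m‖ ^ 2) ^
            ((1 : ℝ) / 2) := by
  have hR : 0 < R := hR'.trans hRR
  refine ⟨R * C₁ * C₂, by positivity, ?_⟩
  intro N Θ uR uR' ψ hu hΘ hu'_sum hψ_sum _
  set q := R' / R
  set w : ℕ → ℝ := fun n => (1 + (n : ℝ) * (n + 1)) ^ ((1 : ℝ) / 2)
  set a : ℕ → ℝ := fun n => ∑ m ∈ Finset.Icc (-(n : ℤ)) n, ‖uR' n m‖ ^ 2
  set b : ℕ → ℝ := fun n => ∑ m ∈ Finset.Icc (-(n : ℤ)) n, ‖ψ n m‖ ^ 2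
  have hw : ∀ n, 0 ≤ w n := fun n => by positivity
  obtain ⟨hsum, hCS⟩ := summable_and_tsum_sqrt_mul_sqrt_le
    (fun n => mul_nonneg (hw n) (by positivity : 0 ≤ a n))
    (fun n => mul_nonneg (hw n) (by positivity : 0 ≤ b n)) hu'_sum hψ_sum
  have hmode : ∀ n, N < n →
      ‖∑ m ∈ Finset.Icc (-(n : ℤ)) n, Θ n * uR n m * (starRingEnd ℂ) (ψ n m)‖ ≤
        C₁ * C₂ * q ^ N * (√(w n * a n) * √(w n * b n)) := by
    intro n hn
    have hqn : q ^ n ≤ q ^ N :=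
      pow_le_pow_of_le_one (by positivity) ((div_le_one hR).2 hRR.le) hn.le
    rw [sqrt_mul_mul_sqrt_mul (hw n)]
    calc _ ≤ ‖Θ n‖ * (C₁ * q ^ n) * (√(a n) * √(b n)) :=
          norm_sum_mul_mul_conj_le _ _ (by positivity) (hu n)
      _ ≤ (C₂ * w n) * (C₁ * q ^ N) * (√(a n) * √(b n)) := by gcongr; exact hΘ n
      _ = _ := by ring
  calc _ = R * ‖∑' n : {n : ℕ // N < n}, ∑ m ∈ Finset.Icc (-(n.1 : ℤ)) n.1,
          Θ n.1 * uR n.1 m * (starRingEnd ℂ) (ψ n.1 m)‖ := by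
        rw [norm_mul, Complex.norm_of_nonneg hR.le]
    _ ≤ R * ∑' n, C₁ * C₂ * q ^ N * (√(w n * a n) * √(w n * b n)) := by
        gcongr
        exact norm_tsum_subtype_le_tsum_of_norm_le (hsum.mul_left _) (fun _ => by positivity) hmode
    _ ≤ R * (C₁ * C₂ * q ^ N * (√(∑' n, w n * a n) * √(∑' n, w n * b n))) := by
        rw [tsum_mul_left]
        gcongr
    _ = _ := by simp only [Real.sqrt_eq_rpow]; ring

/-- Estimate of the DtN truncation term, stated on spherical-harmonic coefficients:
if `|û_n^m(R)| ≤ C₁ (R'/R)^n |û_n^m(R')|` and `|Θ_n(κR)| ≤ C₂ (1+n(n+1))^{1/2}`, then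
`|⟨(T-T_N)u, ψ⟩_{∂B_R}| = |R Σ_{n>N} Σ_{|m|≤n} Θ_n û_n^m(R) conj(ψ̂_n^m)|`
`≤ C (R'/R)^N ‖u‖_{H^{1/2}(∂B_{R'})} ‖ψ‖_{H^{1/2}(∂B_R)}`. -/
theorem dtn_truncation_bound (κ R' R : ℝ) (hκ : 0 < κ) (hR' : 0 < R') (hRR : R' < R)
    (C₁ C₂ : ℝ) (hC₁ : 0 < C₁) (hC₂ : 0 < C₂) :
    ∃ C > 0, ∀ (N : ℕ) (Θ : ℕ → ℂ) (uR uR' ψ : ℕ → ℤ → ℂ),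
      (∀ (n : ℕ) (m : ℤ),
        ‖uR n m‖ ≤ C₁ * (R' / R) ^ n * ‖uR' n m‖) →
      (∀ n : ℕ, ‖Θ n‖ ≤ C₂ * (1 + (n : ℝ) * (n + 1)) ^ ((1 : ℝ) / 2)) →
      Summable (fun n : ℕ => (1 + (n : ℝ) * (n + 1)) ^ ((1 : ℝ) / 2) *
        ∑ m ∈ Finset.Icc (-(n : ℤ)) (n : ℤ), ‖uR' n m‖ ^ 2) →
      Summable (fun n : ℕ => (1 + (n : ℝ) * (n + 1)) ^ ((1 : ℝ) / 2) *
        ∑ m ∈ Finset.Icc (-(n : ℤ)) (n : ℤ), ‖ψ n m‖ ^ 2) →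
      Summable (fun n : {n : ℕ // N < n} =>
        ∑ m ∈ Finset.Icc (-(n.1 : ℤ)) (n.1 : ℤ),
          Θ n.1 * uR n.1 m * (starRingEnd ℂ) (ψ n.1 m)) →
      ‖(R : ℂ) * ∑' n : {n : ℕ // N < n},
          ∑ m ∈ Finset.Icc (-(n.1 : ℤ)) (n.1 : ℤ),
            Θ n.1 * uR n.1 m * (starRingEnd ℂ) (ψ n.1 m)‖ ≤
        C * (R' / R) ^ N *
          (∑' n : ℕ, (1 + (n : ℝ) * (n + 1)) ^ ((1 : ℝ) / 2) *
            ∑ m ∈ Finset.Icc (-(n : ℤ)) (n : ℤ), ‖uR' n m‖ ^ 2) ^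
            ((1 : ℝ) / 2) *
          (∑' n : ℕ, (1 + (n : ℝ) * (n + 1)) ^ ((1 : ℝ) / 2) *
            ∑ m ∈ Finset.Icc (-(n : ℤ)) (n : ℤ), ‖ψ n m‖ ^ 2) ^
            ((1 : ℝ) / 2) :=
  dtn_truncation_bound_general R' R hR' hRR C₁ C₂ hC₁ hC₂
end
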